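/- Let q ∈ ℝ⁴ be nonzero with q₀ = ‖(q₁,q₂,q₃)‖ (so q is a future-pointing null vector), and let γ : [0,1] → ℝ⁴ be a C¹ future-directed causal curve with γ(0) = 0 and γ(1) = q. Then γ lies entirely on the null segment from 0 to q: there exists a nondecreasing function c : [0,1] → [0,1] with c(0) = 0, c(1) = 1 and γ(t) = c(t)·q for all t. (This is the Minkowski case of the corollary that any causal curve joining two points that are causally but not chronologically related must be a null geodesic.) -/

import Mathlib

/-!
The Minkowski pairing `η(q, x) = q₀x₀ - ⟪q⃗, x⃗⟫` with a future causal `q` is nonnegative on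
the future causal cone (reverse Cauchy–Schwarz). Every point `γ t` lies in the causal diamond of
`0` and `q`: both `γ t - γ 0` and `q - γ t` are integrals of causal velocities, hence causal. So
`η(q, γ t) ≥ 0` and `η(q, q - γ t) ≥ 0`, while the two sum to `η(q, q) = 0` for null `q`.
Equality in Cauchy–Schwarz then forces `γ t` onto the line through `q`, and the coefficient
`γ t 0 / q 0` is monotone because the time coordinate of a causal displacement is nonnegative.
-/

/-- The Euclidean norm of the spatial part of a 4-vector. -/
noncomputable def spatialNorm (x : Fin 4 → ℝ) : ℝ :=
  Real.sqrt ((x 1) ^ 2 + (x 2) ^ 2 + (x 3) ^ 2)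

open Set

section

variable {E : Type*} [NormedAddCommGroup E] [InnerProductSpace ℝ E]

theorem eq_div_smul_of_mul_le_inner {x y : E} {a b : ℝ} (hx : ‖x‖ = a) (ha : 0 < a)
    (hy : ‖y‖ ≤ b) (h : a * b ≤ inner ℝ x y) : y = (b / a) • x := by
  subst hx
  have hcs := real_inner_le_norm x y
  have hyb : ‖y‖ = b := hy.antisymm (le_of_mul_le_mul_left (h.trans hcs) ha)
  have hxy : ‖y‖ • x = ‖x‖ • y := inner_eq_norm_mul_iff_real.1 (hcs.antisymm (by rwa [hyb]))
  rw [hyb] at hxy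
  rw [div_eq_inv_mul, mul_smul, hxy, smul_smul, inv_mul_cancel₀ ha.ne', one_smul]

theorem norm_sub_le_sub_of_norm_deriv_le {f f' : ℝ → E} {g g' : ℝ → ℝ} {a b : ℝ}
    (hab : a ≤ b) (hf : ∀ t ∈ Icc a b, HasDerivAt f (f' t) t)
    (hg : ∀ t ∈ Icc a b, HasDerivAt g (g' t) t) (bound : ∀ t ∈ Icc a b, ‖f' t‖ ≤ g' t) :
    ‖f b - f a‖ ≤ g b - g a := by
  have hf' : ∀ t ∈ Icc a b, HasDerivAt (fun s => f s - f a) (f' t) t :=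
    fun t ht => (hf t ht).sub_const _
  have hg' : ∀ t ∈ Icc a b, HasDerivAt (fun s => g s - g a) (g' t) t :=
    fun t ht => (hg t ht).sub_const _
  refine image_norm_le_of_norm_deriv_right_le_deriv_boundary'
    (fun t ht => (hf' t ht).continuousAt.continuousWithinAt)
    (fun t ht => (hf' t (Ico_subset_Icc_self ht)).hasDerivWithinAt) (by simp)
    (fun t ht => (hg' t ht).continuousAt.continuousWithinAt)
    (fun t ht => (hg' t (Ico_subset_Icc_self ht)).hasDerivWithinAt)
    (fun t ht => bound t (Ico_subset_Icc_self ht)) (right_mem_Icc.2 hab)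

end

namespace Minkowski

def spatial : (Fin 4 → ℝ) →L[ℝ] EuclideanSpace ℝ (Fin 3) :=
  (PiLp.continuousLinearEquiv 2 ℝ (fun _ : Fin 3 => ℝ)).symm.toContinuousLinearMap ∘L
    ContinuousLinearMap.pi fun i => ContinuousLinearMap.proj i.succ

@[simp]
theorem spatial_apply (x : Fin 4 → ℝ) (i : Fin 3) : spatial x i = x i.succ := rfl

theorem spatialNorm_eq_norm_spatial (x : Fin 4 → ℝ) : spatialNorm x = ‖spatial x‖ := by
  simp [spatialNorm, EuclideanSpace.norm_eq, Fin.sum_univ_three]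

theorem eq_smul_of_spatial_eq_smul {v q : Fin 4 → ℝ} {c : ℝ} (h₀ : v 0 = c * q 0)
    (hs : spatial v = c • spatial q) : v = c • q := by
  funext i
  refine Fin.cases h₀ (fun j => ?_) i
  simpa using congrArg (· j) hs

def IsFutureCausal (v : Fin 4 → ℝ) : Prop := spatialNorm v ≤ v 0

noncomputable def minkowskiInner (u v : Fin 4 → ℝ) : ℝ :=
  u 0 * v 0 - inner ℝ (spatial u) (spatial v)

theorem minkowskiInner_sub_right (u v w : Fin 4 → ℝ) :
    minkowskiInner u (v - w) = minkowskiInner u v - minkowskiInner u w := by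
  simp only [minkowskiInner, Pi.sub_apply, map_sub, inner_sub_right]
  ring

theorem minkowskiInner_self_eq_zero {q : Fin 4 → ℝ} (hq : q 0 = spatialNorm q) :
    minkowskiInner q q = 0 := by
  rw [minkowskiInner, real_inner_self_eq_norm_sq, ← spatialNorm_eq_norm_spatial, ← hq]
  ring

theorem IsFutureCausal.time_nonneg {v : Fin 4 → ℝ} (hv : IsFutureCausal v) : 0 ≤ v 0 :=
  (Real.sqrt_nonneg _).trans hv

theorem minkowskiInner_nonneg {u v : Fin 4 → ℝ} (hu : IsFutureCausal u)
    (hv : IsFutureCausal v) : 0 ≤ minkowskiInner u v := by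
  rw [IsFutureCausal, spatialNorm_eq_norm_spatial] at hu hv
  have := real_inner_le_norm (spatial u) (spatial v)
  have := mul_le_mul hu hv (norm_nonneg _) ((norm_nonneg _).trans hu)
  rw [minkowskiInner]
  linarith

theorem time_pos_of_null {q : Fin 4 → ℝ} (hq0 : q ≠ 0) (hq : q 0 = spatialNorm q) :
    0 < q 0 := by
  refine (IsFutureCausal.time_nonneg hq.ge).lt_of_ne fun h => hq0 ?_
  rw [spatialNorm_eq_norm_spatial, ← h, eq_comm, norm_eq_zero] at hq
  simpa using eq_smul_of_spatial_eq_smul (c := 0) (q := q) (by simp [← h]) (by simp [hq])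

theorem eq_div_smul_of_isFutureCausal_of_isFutureCausal_sub {q v : Fin 4 → ℝ} (hq0 : q ≠ 0)
    (hq : q 0 = spatialNorm q) (hv : IsFutureCausal v) (hqv : IsFutureCausal (q - v)) :
    v = (v 0 / q 0) • q := by
  have hpos := time_pos_of_null hq0 hq
  have h₁ := minkowskiInner_nonneg hq.ge hv
  have h₂ := minkowskiInner_nonneg hq.ge hqv
  rw [minkowskiInner_sub_right, minkowskiInner_self_eq_zero hq] at h₂
  have hinner : q 0 * v 0 ≤ inner ℝ (spatial q) (spatial v) := by
    rw [minkowskiInner] at h₁ h₂; linarith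
  rw [IsFutureCausal, spatialNorm_eq_norm_spatial] at hv
  refine eq_smul_of_spatial_eq_smul (div_mul_cancel₀ _ hpos.ne').symm ?_
  exact eq_div_smul_of_mul_le_inner (by rw [← spatialNorm_eq_norm_spatial, hq]) hpos hv hinner

theorem isFutureCausal_sub_of_hasDerivAt {γ γ' : ℝ → Fin 4 → ℝ} {a b : ℝ} (hab : a ≤ b)
    (hderiv : ∀ t ∈ Icc a b, HasDerivAt γ (γ' t) t)
    (hcausal : ∀ t ∈ Icc a b, IsFutureCausal (γ' t)) : IsFutureCausal (γ b - γ a) := by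
  rw [IsFutureCausal, spatialNorm_eq_norm_spatial, map_sub]
  exact norm_sub_le_sub_of_norm_deriv_le hab
    (fun t ht => spatial.hasFDerivAt.comp_hasDerivAt t (hderiv t ht))
    (fun t ht => hasDerivAt_pi.1 (hderiv t ht) 0)
    (fun t ht => spatialNorm_eq_norm_spatial (γ' t) ▸ hcausal t ht)

end Minkowski

open Minkowski

theorem causal_curve_to_null_point_is_null_segment_general
    (q : Fin 4 → ℝ) (hq0 : q ≠ 0) (hqnull : q 0 = spatialNorm q)
    (γ γ' : ℝ → Fin 4 → ℝ)
    (hderiv : ∀ t ∈ Set.Icc (0 : ℝ) 1, HasDerivAt γ (γ' t) t)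
    (hcausal : ∀ t ∈ Set.Icc (0 : ℝ) 1, spatialNorm (γ' t) ≤ γ' t 0)
    (h0 : γ 0 = 0) (h1 : γ 1 = q) :
    ∃ c : ℝ → ℝ, MonotoneOn c (Set.Icc 0 1) ∧ c 0 = 0 ∧ c 1 = 1 ∧
      (∀ t ∈ Set.Icc (0 : ℝ) 1, c t ∈ Set.Icc (0 : ℝ) 1) ∧
      ∀ t ∈ Set.Icc (0 : ℝ) 1, γ t = c t • q := by
  have hdisp : ∀ s ∈ Icc (0 : ℝ) 1, ∀ t ∈ Icc (0 : ℝ) 1, s ≤ t → IsFutureCausal (γ t - γ s) :=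
    fun s hs t ht hst => isFutureCausal_sub_of_hasDerivAt hst
      (fun u hu => hderiv u ⟨hs.1.trans hu.1, hu.2.trans ht.2⟩)
      (fun u hu => hcausal u ⟨hs.1.trans hu.1, hu.2.trans ht.2⟩)
  have hpos := time_pos_of_null hq0 hqnull
  have hmono : MonotoneOn (fun t => γ t 0 / q 0) (Icc 0 1) := fun s hs t ht hst =>
    div_le_div_of_nonneg_right (sub_nonneg.1 (hdisp s hs t ht hst).time_nonneg) hpos.le
  have hc0 : γ 0 0 / q 0 = 0 := by simp [h0]
  have hc1 : γ 1 0 / q 0 = 1 := by rw [h1, div_self hpos.ne']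
  refine ⟨fun t => γ t 0 / q 0, hmono, hc0, hc1, fun t ht => ?_, fun t ht => ?_⟩
  · have hl := hmono (left_mem_Icc.2 zero_le_one) ht ht.1
    have hr := hmono ht (right_mem_Icc.2 zero_le_one) ht.2
    simp only [hc0, hc1] at hl hr
    exact ⟨hl, hr⟩
  · have hfrom := hdisp 0 (left_mem_Icc.2 zero_le_one) t ht ht.1
    have hto := hdisp t ht 1 (right_mem_Icc.2 zero_le_one) ht.2
    rw [h0, sub_zero] at hfrom
    rw [h1] at hto
    exact eq_div_smul_of_isFutureCausal_of_isFutureCausal_sub hq0 hqnull hfrom hto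

/-- If `q` is a nonzero future-pointing null vector and `γ : [0,1] → ℝ⁴` is a
`C¹` future-directed causal curve from the origin to `q`, then `γ` lies
entirely on the null segment from `0` to `q`: `γ(t) = c(t)·q` for some
nondecreasing `c : [0,1] → [0,1]` with `c(0) = 0`, `c(1) = 1`. (Minkowski case
of: a causal curve joining causally but not chronologically related points is
a null geodesic.) -/
theorem causal_curve_to_null_point_is_null_segment
    (q : Fin 4 → ℝ) (hq0 : q ≠ 0) (hqnull : q 0 = spatialNorm q)
    (γ γ' : ℝ → Fin 4 → ℝ)
    (hderiv : ∀ t ∈ Set.Icc (0 : ℝ) 1, HasDerivAt γ (γ' t) t)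
    (hcont : ContinuousOn γ' (Set.Icc 0 1))
    (hcausal : ∀ t ∈ Set.Icc (0 : ℝ) 1, spatialNorm (γ' t) ≤ γ' t 0)
    (h0 : γ 0 = 0) (h1 : γ 1 = q) :
    ∃ c : ℝ → ℝ, MonotoneOn c (Set.Icc 0 1) ∧ c 0 = 0 ∧ c 1 = 1 ∧
      (∀ t ∈ Set.Icc (0 : ℝ) 1, c t ∈ Set.Icc (0 : ℝ) 1) ∧
      ∀ t ∈ Set.Icc (0 : ℝ) 1, γ t = c t • q :=
  causal_curve_to_null_point_is_null_segment_general q hq0 hqnull γ γ' hderiv hcausal h0 h1
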